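/- Let M be a matroid on a linearly ordered finite set E. Then T(M; 1+x, y) = Σ_{X,k} x^{r(M)−r(X)} y^{k−r(X)} · N(X,k), where the sum is over flats X of M and integers k ≥ 0, and N(X,k) is the number of independent sets I of M with closure X satisfying |I ∪ ex(I)| = k. -/

import Mathlib

open Finset
open scoped Classical

noncomputable section

variable {β : Type*} [Fintype β]

/-- The (ℕ-valued) rank of a set in a matroid: the maximal size of an independent
subset. -/
def mrank (M : Matroid β) (S : Finset β) : ℕ :=
  sSup {c | ∃ I : Finset β, I ⊆ S ∧ M.Indep ↑I ∧ I.card = c}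

/-- `C` is a circuit of `M`: a minimal dependent set. -/
def MIsCircuit {α : Type*} (M : Matroid α) (C : Set α) : Prop :=
  M.Dep C ∧ ∀ e ∈ C, M.Indep (C \ {e})

/-- `ex(I)`: the externally active elements of `I`, i.e. the elements `e` that are
smallest in some circuit contained in `I ∪ {e}`. -/
def mexSet {α : Type*} [LinearOrder α] (M : Matroid α) (I : Set α) : Set α :=
  {e | ∃ C, MIsCircuit M C ∧ C ⊆ insert e I ∧ e ∈ C ∧ ∀ f ∈ C, e ≤ f}

/-- `in(B)`: the internally active elements of the basis `B`, i.e. the elements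
`e ∈ B` that are smallest in some cocircuit contained in `E − (B − e)`. -/
def minSet {α : Type*} [LinearOrder α] (M : Matroid α) (B : Set α) : Set α :=
  {e | e ∈ B ∧ ∃ D, MIsCircuit M✶ D ∧ D ⊆ (M.E \ B) ∪ {e} ∧ e ∈ D ∧ ∀ f ∈ D, e ≤ f}

/-- Corank-nullity Tutte polynomial evaluation. -/
def tutteEval {α : Type*} [Fintype α] [DecidableEq α] {R : Type*} [CommRing R]
    (r : Finset α → ℕ) (x y : R) : R :=
  ∑ S : Finset α, (x - 1) ^ (r Finset.univ - r S) * (y - 1) ^ (S.card - r S)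

end

set_option linter.unusedSectionVars false
set_option maxHeartbeats 1000000

noncomputable section Helpers

variable {α : Type*} [Fintype α] [LinearOrder α] {M : Matroid α}

lemma dep_of_not_indep (hE : M.E = Set.univ) {X : Set α} (h : ¬ M.Indep X) : M.Dep X :=
  ⟨h, by rw [hE]; exact Set.subset_univ _⟩

lemma exists_circuit_subset (hE : M.E = Set.univ) {S : Finset α} (hS : ¬ M.Indep ↑S) :
    ∃ C : Finset α, C ⊆ S ∧ C.Nonempty ∧ MIsCircuit M ↑C := by
  have hne : (S.powerset.filter (fun D : Finset α => ¬ M.Indep (D : Set α))).Nonempty := ⟨S, by simp [hS]⟩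
  obtain ⟨C, hCmem, hCmin⟩ := Finset.exists_min_image _ Finset.card hne
  simp only [mem_filter, Finset.mem_powerset] at hCmem
  refine ⟨C, hCmem.1, ?_, dep_of_not_indep hE hCmem.2, ?_⟩
  · rw [nonempty_iff_ne_empty]; rintro rfl; exact hCmem.2 (by simpa using M.empty_indep)
  · intro e he
    by_contra hdep
    have : (C.erase e) ∈ (S.powerset.filter (fun D : Finset α => ¬ M.Indep (D : Set α))) := by
      simp only [mem_filter, Finset.mem_powerset]
      exact ⟨(Finset.erase_subset _ _).trans hCmem.1, by simpa [Finset.coe_erase] using hdep⟩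
    have := hCmin _ this
    have hlt : (C.erase e).card < C.card := Finset.card_erase_lt_of_mem (by
      simpa using he)
    omega

lemma mem_mexSet_iff (hE : M.E = Set.univ) {I : Finset α} (hI : M.Indep ↑I) {e : α} :
    e ∈ mexSet M ↑I ↔ e ∉ I ∧ e ∈ M.closure ↑(I.filter (e < ·)) := by
  constructor
  · rintro ⟨C, ⟨hCdep, hCmin⟩, hCsub, heC, hemin⟩
    have heI : e ∉ I := by
      intro heI
      refine hCdep.not_indep (hI.subset ?_)
      rwa [Set.insert_eq_of_mem (by simpa using heI)] at hCsub
    refine ⟨heI, ?_⟩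
    have h1 : M.Indep (C \ {e}) := hCmin e heC
    have h2 : e ∈ M.closure (C \ {e}) := by
      have := h1.insert_dep_iff.mp (by rwa [Set.insert_diff_singleton, Set.insert_eq_of_mem heC])
      exact this.1
    refine M.closure_subset_closure ?_ h2
    rintro f ⟨hfC, hfe⟩
    have hfI : f ∈ I := by
      rcases hCsub hfC with h | h
      · exact absurd h hfe
      · simpa using h
    have : e < f := lt_of_le_of_ne (hemin f hfC) (fun h => hfe h.symm)
    simp [hfI, this]
  · rintro ⟨heI, hecl⟩
    have hne : ((I.filter (e < ·)).powerset.filter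
        (fun J : Finset α => e ∈ M.closure (J : Set α))).Nonempty :=
      ⟨I.filter (e < ·), by
        simp only [mem_filter, Finset.mem_powerset]; exact ⟨Finset.Subset.refl _, hecl⟩⟩
    obtain ⟨J, hJmem, hJmin⟩ := Finset.exists_min_image _ Finset.card hne
    simp only [mem_filter, Finset.mem_powerset] at hJmem
    obtain ⟨hJsub, heJ⟩ := hJmem
    have hJI : M.Indep (J : Set α) :=
      hI.subset (Finset.coe_subset.mpr (hJsub.trans (Finset.filter_subset _ I)))
    have heJ' : e ∉ (J : Set α) := by
      intro h
      simp only [Finset.mem_coe] at h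
      exact absurd (Finset.mem_filter.mp (hJsub h)).2 (lt_irrefl e)
    refine ⟨insert e (J : Set α), ⟨?_, ?_⟩, ?_, Set.mem_insert _ _, ?_⟩
    · exact hJI.insert_dep_iff.mpr ⟨heJ, heJ'⟩
    · rintro f hf
      rcases Set.mem_insert_iff.mp hf with rfl | hfJ
      · rwa [Set.insert_diff_self_of_notMem heJ']
      · have hfJ' : f ∈ J := by simpa using hfJ
        have hJe : M.Indep (↑(J.erase f) : Set α) := hJI.subset (by simp [Finset.erase_subset])
        have hmin : e ∉ M.closure ↑(J.erase f) := by
          intro hmem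
          have : J.erase f ∈ ((I.filter (e < ·)).powerset.filter
              (fun J : Finset α => e ∈ M.closure (J : Set α))) := by
            simp only [mem_filter, Finset.mem_powerset]
            exact ⟨(Finset.erase_subset _ _).trans hJsub, hmem⟩
          have h1 := hJmin _ this
          have h2 : (J.erase f).card < J.card := Finset.card_erase_lt_of_mem hfJ'
          omega
        have heJe : e ∉ (↑(J.erase f) : Set α) := by
          simp only [Finset.coe_erase, Set.mem_diff] at *
          exact fun h => heJ' h.1
        have : M.Indep (insert e ↑(J.erase f)) :=
          (hJe.insert_indep_iff_of_notMem heJe).mpr (by rw [hE]; exact ⟨trivial, hmin⟩)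
        convert this using 1
        rw [Set.insert_diff_of_notMem _ (by rintro rfl; exact heJ' (by simpa using hfJ'))]
        simp [Finset.coe_erase]
    · rw [Set.insert_subset_insert_iff heJ']
      exact Finset.coe_subset.mpr (hJsub.trans (Finset.filter_subset _ I))
    · rintro f hf
      rcases Set.mem_insert_iff.mp hf with rfl | hfJ
      · exact le_refl _
      · have : f ∈ I.filter (e < ·) := hJsub (by simpa using hfJ)
        exact le_of_lt (Finset.mem_filter.mp this).2

/-- The greedy-from-the-top basis of a finset. -/
def gB (M : Matroid α) (S : Finset α) : Finset α :=
  S.filter (fun e => e ∉ M.closure ↑(S.filter (e < ·)))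

lemma gB_subset (S : Finset α) : gB M S ⊆ S := Finset.filter_subset _ _

lemma indep_coe_iff (hE : M.E = Set.univ) (S : Finset α) :
    M.Indep ↑S ↔ ∀ e ∈ S, e ∉ M.closure ↑(S.filter (e < ·)) := by
  constructor
  · intro h e he hecl
    refine h.notMem_closure_diff_of_mem (by simpa using he) (M.closure_subset_closure ?_ hecl)
    intro f hf
    simp only [Finset.coe_filter, Set.mem_setOf_eq] at hf
    exact ⟨by simpa using hf.1, fun h => absurd (h ▸ hf.2) (lt_irrefl e)⟩
  · intro h
    by_contra hdep
    obtain ⟨C, hCS, hCne, hCdep, hCmin⟩ := exists_circuit_subset hE hdep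
    set e := C.min' hCne with he
    have heC : e ∈ C := C.min'_mem hCne
    have h1 : M.Indep ((C : Set α) \ {e}) := hCmin e (by simpa using heC)
    have h2 : e ∈ M.closure ((C : Set α) \ {e}) :=
      (h1.insert_dep_iff.mp (by
        rwa [Set.insert_diff_singleton, Set.insert_eq_of_mem (by simpa using heC)])).1
    refine h e (hCS heC) (M.closure_subset_closure ?_ h2)
    rintro f ⟨hfC, hfe⟩
    have hfC' : f ∈ C := by simpa using hfC
    have : e < f := lt_of_le_of_ne (C.min'_le f hfC') (fun h => hfe (by simp [h]))
    simp only [Finset.coe_filter, Set.mem_setOf_eq]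
    exact ⟨hCS hfC', this⟩

lemma gB_indep (hE : M.E = Set.univ) (S : Finset α) : M.Indep ↑(gB M S) := by
  rw [indep_coe_iff hE]
  intro e he hecl
  have he' := Finset.mem_filter.mp he
  refine he'.2 (M.closure_subset_closure ?_ hecl)
  exact Finset.coe_subset.mpr (Finset.filter_subset_filter _ (gB_subset S))

lemma key_mem_closure (hE : M.E = Set.univ) (S : Finset α) :
    ∀ f ∈ S, f ∈ M.closure ↑((gB M S).filter (f ≤ ·)) := by
  intro f
  induction f using IsWellFounded.induction (α := α) (· > ·) with
  | _ f IH =>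
    intro hf
    by_cases hfg : f ∈ gB M S
    · refine M.subset_closure _ (by rw [hE]; exact Set.subset_univ _) ?_
      simp only [Finset.coe_filter, Set.mem_setOf_eq]
      exact ⟨hfg, le_refl f⟩
    · have hfcl : f ∈ M.closure ↑(S.filter (f < ·)) := by
        by_contra h
        exact hfg (Finset.mem_filter.mpr ⟨hf, h⟩)
      refine M.closure_subset_closure_of_subset_closure ?_ hfcl
      intro g hg
      simp only [Finset.coe_filter, Set.mem_setOf_eq] at hg
      refine M.closure_subset_closure ?_ (IH g hg.2 hg.1)
      intro x hx
      simp only [Finset.coe_filter, Set.mem_setOf_eq] at hx ⊢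
      exact ⟨hx.1, le_of_lt (lt_of_lt_of_le hg.2 hx.2)⟩

lemma gB_basis (hE : M.E = Set.univ) (S : Finset α) : M.IsBasis ↑(gB M S) ↑S := by
  refine (gB_indep hE S).isBasis_of_subset_of_subset_closure
    (Finset.coe_subset.mpr (gB_subset S)) ?_
  intro f hf
  refine M.closure_subset_closure
    (Finset.coe_subset.mpr (Finset.filter_subset (f ≤ ·) (gB M S)))
    (key_mem_closure hE S f (by simpa using hf))

lemma sdiff_gB_subset_mexSet (hE : M.E = Set.univ) {S : Finset α} {e : α}
    (heS : e ∈ S) (heg : e ∉ gB M S) : e ∈ mexSet M ↑(gB M S) := by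
  rw [mem_mexSet_iff hE (gB_indep hE S)]
  refine ⟨heg, ?_⟩
  have hfcl : e ∈ M.closure ↑(S.filter (e < ·)) := by
    by_contra h
    exact heg (Finset.mem_filter.mpr ⟨heS, h⟩)
  refine M.closure_subset_closure_of_subset_closure ?_ hfcl
  intro g hg
  simp only [Finset.coe_filter, Set.mem_setOf_eq] at hg
  refine M.closure_subset_closure ?_ (key_mem_closure hE S g hg.1)
  intro x hx
  simp only [Finset.coe_filter, Set.mem_setOf_eq] at hx ⊢
  exact ⟨hx.1, lt_of_lt_of_le hg.2 hx.2⟩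

lemma mexSet_not_mem {I : Finset α} (hI : M.Indep ↑I) {e : α} (he : e ∈ mexSet M ↑I) : e ∉ I := by
  rintro heI
  obtain ⟨C, ⟨hCdep, _⟩, hCsub, -, -⟩ := he
  exact hCdep.not_indep (hI.subset (by rwa [Set.insert_eq_of_mem (by simpa using heI)] at hCsub))

lemma gB_union (hE : M.E = Set.univ) {I A : Finset α} (hI : M.Indep ↑I)
    (hA : ∀ a ∈ A, a ∈ mexSet M ↑I) : gB M (I ∪ A) = I := by
  ext e
  simp only [gB, Finset.mem_filter, Finset.mem_union]
  constructor
  · rintro ⟨he | he, hecl⟩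
    · exact he
    · exfalso
      have := ((mem_mexSet_iff hE hI).mp (hA e he)).2
      refine hecl (M.closure_subset_closure ?_ this)
      refine Finset.coe_subset.mpr (Finset.filter_subset_filter _ ?_)
      exact Finset.subset_union_left
  · intro heI
    refine ⟨Or.inl heI, fun hecl => ?_⟩
    have hsub : ↑((I ∪ A).filter (e < ·)) ⊆ M.closure ↑(I.filter (e < ·)) := by
      intro g hg
      simp only [Finset.coe_filter, Finset.mem_union, Set.mem_setOf_eq] at hg
      obtain ⟨hgIA, hge⟩ := hg
      rcases hgIA with hgI | hgA
      · refine M.subset_closure _ (by rw [hE]; exact Set.subset_univ _) ?_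
        simp only [Finset.coe_filter, Set.mem_setOf_eq]
        exact ⟨hgI, hge⟩
      · have := ((mem_mexSet_iff hE hI).mp (hA g hgA)).2
        refine M.closure_subset_closure ?_ this
        intro x hx
        simp only [Finset.coe_filter, Set.mem_setOf_eq] at hx ⊢
        exact ⟨hx.1, lt_trans hge hx.2⟩
    have : e ∈ M.closure ↑(I.filter (e < ·)) :=
      M.closure_subset_closure_of_subset_closure hsub hecl
    refine hI.notMem_closure_diff_of_mem (by simpa using heI)
      (M.closure_subset_closure ?_ this)
    intro f hf
    simp only [Finset.coe_filter, Set.mem_setOf_eq] at hf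
    exact ⟨by simpa using hf.1, fun h => absurd (h ▸ hf.2) (lt_irrefl e)⟩

lemma mrank_eq_card_of_basis {I S : Finset α} (h : M.IsBasis ↑I ↑S) :
    mrank M S = I.card := by
  refine IsGreatest.csSup_eq ⟨⟨I, Finset.coe_subset.mp h.subset, h.indep, rfl⟩, ?_⟩
  rintro c ⟨J, hJS, hJind, rfl⟩
  obtain ⟨J', hJ', hJJ'⟩ := hJind.subset_isBasis_of_subset
    (Finset.coe_subset.mpr hJS) (h.subset_ground)
  have h1 : (J : Set α).encard ≤ J'.encard := Set.encard_mono hJJ'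
  rw [hJ'.encard_eq_encard h] at h1
  rwa [Set.encard_coe_eq_coe_finsetCard, Set.encard_coe_eq_coe_finsetCard,
    Nat.cast_le] at h1

lemma closure_flat' (M : Matroid α) (X : Set α) : M.IsFlat (M.closure X) := by
  rw [Matroid.closure_def, Set.sInter_eq_iInter]
  have hne : Nonempty {F // F ∈ {F | M.IsFlat F ∧ X ∩ M.E ⊆ F}} :=
    ⟨⟨M.E, M.ground_isFlat, Set.inter_subset_right⟩⟩
  exact Matroid.IsFlat.iInter (fun F => F.2.1)

/-- The externally active elements as a Finset. -/
def exF (M : Matroid α) (I : Finset α) : Finset α :=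
  Finset.univ.filter (· ∈ mexSet M ↑I)

lemma coe_exF (M : Matroid α) (I : Finset α) : ↑(exF M I) = mexSet M ↑I := by
  ext a; simp [exF]

lemma exF_disjoint {I : Finset α} (hI : M.Indep ↑I) : Disjoint I (exF M I) := by
  rw [Finset.disjoint_right]
  intro a ha
  simp only [exF, mem_filter] at ha
  exact mexSet_not_mem hI ha.2

lemma ncard_union_mex {I : Finset α} (hI : M.Indep ↑I) :
    (↑I ∪ mexSet M ↑I).ncard = I.card + (exF M I).card := by
  rw [← coe_exF, ← Finset.coe_union, Set.ncard_coe_finset,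
    Finset.card_union_of_disjoint (exF_disjoint hI)]

lemma mrank_closure_eq {I : Finset α} (hI : M.Indep ↑I) {Xf : Finset α}
    (hX : M.closure ↑I = ↑Xf) : mrank M Xf = I.card :=
  mrank_eq_card_of_basis (hX ▸ hI.isBasis_closure)

end Helpers

/-- `T(M; 1+x, y) = ∑_{X,k} x^{r(M)−r(X)} y^{k−r(X)} N(X,k)`, where
the sum is over flats `X` and `k ≥ 0`, and `N(X,k)` counts the independent sets `I`
with closure `X` and `|I ∪ ex(I)| = k`. -/
theorem statement18 {α : Type*} [Fintype α] [LinearOrder α]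
    (M : Matroid α) (hE : M.E = Set.univ) :
    tutteEval (mrank M) (1 + MvPolynomial.X 0 : MvPolynomial (Fin 2) ℚ)
        (MvPolynomial.X 1) =
      ∑ Xf : Finset α, ∑ k ∈ Finset.range (Fintype.card α + 1),
        if M.IsFlat ↑Xf then
          MvPolynomial.X 0 ^ (mrank M Finset.univ - mrank M Xf) *
            MvPolynomial.X 1 ^ (k - mrank M Xf) *
            (Set.ncard {I : Finset α | M.Indep ↑I ∧ M.closure ↑I = ↑Xf ∧
                (↑I ∪ mexSet M ↑I).ncard = k} : MvPolynomial (Fin 2) ℚ)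
        else 0 := by
  classical
  set x : MvPolynomial (Fin 2) ℚ := MvPolynomial.X 0 with hx
  set y : MvPolynomial (Fin 2) ℚ := MvPolynomial.X 1 with hy
  set r0 := mrank M Finset.univ with hr0
  -- LHS computation
  have hL : tutteEval (mrank M) (1 + x) y
      = ∑ I : Finset α, if M.Indep ↑I then x ^ (r0 - I.card) * y ^ ((exF M I).card)
        else 0 := by
    rw [tutteEval,
      ← Finset.sum_fiberwise_of_maps_to (g := gB M) (t := Finset.univ)
        (fun _ _ => Finset.mem_univ _)]
    refine Finset.sum_congr rfl (fun I _ => ?_)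
    by_cases hI : M.Indep ↑I
    · rw [if_pos hI]
      have hstep : ∑ S ∈ Finset.univ.filter (fun S => gB M S = I),
          ((1 + x) - 1) ^ (r0 - mrank M S) * (y - 1) ^ (S.card - mrank M S)
          = ∑ A ∈ (exF M I).powerset, x ^ (r0 - I.card) * (y - 1) ^ A.card := by
        refine Finset.sum_nbij' (fun S => S \ I) (fun A => I ∪ A) ?_ ?_ ?_ ?_ ?_
        · intro S hS
          simp only [mem_filter, Finset.mem_univ, true_and] at hS
          rw [Finset.mem_powerset]
          intro e he
          obtain ⟨heS, heI⟩ := Finset.mem_sdiff.mp he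
          simp only [exF, mem_filter, Finset.mem_univ, true_and]
          rw [← hS]
          exact sdiff_gB_subset_mexSet hE heS (hS ▸ heI)
        · intro A hA
          simp only [mem_filter, Finset.mem_univ, true_and]
          refine gB_union hE hI (fun a ha => ?_)
          have := Finset.mem_powerset.mp hA ha
          simpa [exF] using this
        · intro S hS
          simp only [mem_filter, Finset.mem_univ, true_and] at hS
          exact Finset.union_sdiff_of_subset (hS ▸ gB_subset S)
        · intro A hA
          exact Finset.union_sdiff_cancel_left
            (Finset.disjoint_of_subset_right (Finset.mem_powerset.mp hA) (exF_disjoint hI))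
        · intro S hS
          simp only [mem_filter, Finset.mem_univ, true_and] at hS
          have h1 : mrank M S = I.card := by
            rw [← hS]; exact mrank_eq_card_of_basis (gB_basis hE S)
          have h2 : S.card - I.card = ((fun S => S \ I) S).card := by
            show S.card - I.card = (S \ I).card
            rw [Finset.card_sdiff_of_subset (hS ▸ gB_subset S)]
          rw [h1, h2, add_sub_cancel_left]
      rw [hstep, ← Finset.mul_sum]
      congr 1
      have h := Finset.sum_pow_mul_eq_add_pow (y - 1) 1 (exF M I)
      simpa using h
    · rw [if_neg hI]
      refine Finset.sum_eq_zero (fun S hS => ?_)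
      simp only [mem_filter, Finset.mem_univ, true_and] at hS
      exact absurd (hS ▸ gB_indep hE S) hI
  -- RHS computation
  have hterm : ∀ Xf : Finset α, ∀ k : ℕ,
      (if M.IsFlat ↑Xf then
          x ^ (r0 - mrank M Xf) * y ^ (k - mrank M Xf) *
            (Set.ncard {I : Finset α | M.Indep ↑I ∧ M.closure ↑I = ↑Xf ∧
                (↑I ∪ mexSet M ↑I).ncard = k} : MvPolynomial (Fin 2) ℚ)
        else 0)
      = ∑ I : Finset α, if (M.Indep ↑I ∧ M.closure ↑I = ↑Xf ∧
          (↑I ∪ mexSet M ↑I).ncard = k)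
          then x ^ (r0 - I.card) * y ^ ((exF M I).card) else 0 := by
    intro Xf k
    rw [← Finset.sum_filter]
    by_cases hF : M.IsFlat ↑Xf
    · rw [if_pos hF]
      have hsum : ∑ I ∈ Finset.univ.filter (fun I : Finset α => M.Indep ↑I ∧
            M.closure ↑I = ↑Xf ∧ (↑I ∪ mexSet M ↑I).ncard = k),
            x ^ (r0 - I.card) * y ^ ((exF M I).card)
          = ∑ _I ∈ Finset.univ.filter (fun I : Finset α => M.Indep ↑I ∧
            M.closure ↑I = ↑Xf ∧ (↑I ∪ mexSet M ↑I).ncard = k),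
            x ^ (r0 - mrank M Xf) * y ^ (k - mrank M Xf) := by
        refine Finset.sum_congr rfl (fun I hI => ?_)
        simp only [mem_filter, Finset.mem_univ, true_and] at hI
        obtain ⟨h1, h2, h3⟩ := hI
        have hm : mrank M Xf = I.card := mrank_closure_eq h1 h2
        have hk : k = I.card + (exF M I).card := by rw [← h3, ncard_union_mex h1]
        rw [hm, hk, Nat.add_sub_cancel_left]
      rw [hsum, Finset.sum_const, nsmul_eq_mul]
      have hcount : {I : Finset α | M.Indep ↑I ∧ M.closure ↑I = ↑Xf ∧
          (↑I ∪ mexSet M ↑I).ncard = k}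
          = ↑(Finset.univ.filter (fun I : Finset α => M.Indep ↑I ∧
            M.closure ↑I = ↑Xf ∧ (↑I ∪ mexSet M ↑I).ncard = k)) := by
        ext I; simp
      rw [hcount, Set.ncard_coe_finset]
      ring
    · rw [if_neg hF]
      refine (Finset.sum_eq_zero (fun I hI => ?_)).symm
      simp only [mem_filter, Finset.mem_univ, true_and] at hI
      exact absurd (hI.2.1 ▸ closure_flat' M ↑I) hF
  rw [hL]
  rw [Finset.sum_congr rfl (fun Xf _ => Finset.sum_congr rfl (fun k _ => hterm Xf k))]
  rw [Finset.sum_congr rfl (fun Xf _ => Finset.sum_comm), Finset.sum_comm]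
  refine (Finset.sum_congr rfl (fun I _ => ?_)).symm
  by_cases hI : M.Indep ↑I
  · rw [if_pos hI]
    set Xf0 : Finset α := (M.closure ↑I).toFinset with hXf0
    have hXf0coe : (↑Xf0 : Set α) = M.closure ↑I := Set.coe_toFinset _
    set k0 : ℕ := (↑I ∪ mexSet M ↑I).ncard with hk0
    rw [Finset.sum_eq_single_of_mem Xf0 (Finset.mem_univ _)]
    · rw [Finset.sum_eq_single_of_mem k0 ?_]
      · rw [if_pos ⟨hI, hXf0coe.symm, rfl⟩]
      · intro k _ hk
        rw [if_neg]
        rintro ⟨-, -, h3⟩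
        exact hk ((hk0.trans h3).symm)
      · rw [Finset.mem_range]
        have : k0 = I.card + (exF M I).card := ncard_union_mex hI
        have hle : I.card + (exF M I).card ≤ Fintype.card α := by
          rw [← Finset.card_union_of_disjoint (exF_disjoint hI)]
          exact Finset.card_le_univ _
        omega
    · intro Xf _ hXf
      refine Finset.sum_eq_zero (fun k _ => ?_)
      rw [if_neg]
      rintro ⟨-, h2, -⟩
      exact hXf (Finset.coe_injective (by rw [hXf0coe, h2]))
  · rw [if_neg hI]
    refine Finset.sum_eq_zero (fun Xf _ => Finset.sum_eq_zero (fun k _ => ?_))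
    rw [if_neg]
    rintro ⟨h1, -, -⟩
    exact hI h1
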